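/- arXiv:1903.07345 — 3 statements merged into one kernel-verified Lean document; each statement's English description precedes it below -/
import Mathlib

section
/- For a symmetric positive semidefinite matrix L ∈ ℝ^{N×N} (a graph Laplacian of a connected graph) with eigenvalues 0 = λ₁ < λ₂ ≤ ... ≤ λ_max, the choice α* = 2/(λ₂ + λ_max) minimizes, over α ∈ ℝ, the spectral norm ‖I_N − αL − (1/N)𝟙𝟙ᵀ‖₂, and the minimal value equals (λ_max − λ₂)/(λ_max + λ₂), which is strictly less than 1. -/
/-!
On the orthogonal complement of `𝟙` the matrix `I - αL - (1/N)𝟙𝟙ᵀ` acts as `I - αL`, and it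
kills `𝟙`. Its quadratic form at `w + s𝟙` (with `w ⊥ 𝟙`) is `‖w‖² - α wᵀLw`, which lies between
`(1 - αλmax)‖w‖²` and `(1 - αλ₂)‖w‖²`. As the matrix is symmetric, its norm is the largest absolute
value of its Rayleigh quotient, so it is at most `max |1 - αλ₂| |1 - αλmax|`, and eigenvectors of
`λ₂` and `λmax` orthogonal to `𝟙` show that it is at least this. The maximum is smallest where
`1 - αλ₂ = αλmax - 1`, that is at `α = 2/(λ₂ + λmax)`, where both equal `(λmax - λ₂)/(λmax + λ₂)`.
-/

open Matrix

theorem abs_sub_two_div_add_mul_le {a b x q : ℝ} (hsum : 0 < a + b)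
    (hq : a * x ≤ q ∧ q ≤ b * x) : |x - 2 / (a + b) * q| ≤ (b - a) / (b + a) * x := by
  have hlhs : x - 2 / (a + b) * q = ((a + b) * x - 2 * q) / (a + b) := by field_simp
  have hrhs : (b - a) / (b + a) * x = (b - a) * x / (a + b) := by rw [add_comm b a]; ring
  rw [hlhs, hrhs, abs_div, abs_of_pos hsum, div_le_div_iff_of_pos_right hsum, abs_le]
  constructor <;> linarith [hq.1, hq.2]

theorem div_le_max_abs_one_sub_mul {a b : ℝ} (ha : 0 ≤ a) (hb : 0 ≤ b) (hsum : 0 < a + b)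
    (α : ℝ) : (b - a) / (b + a) ≤ max |1 - α * a| |1 - α * b| := by
  set m := max |1 - α * a| |1 - α * b|
  rw [div_le_iff₀ (by linarith)]
  calc b - a = b * (1 - α * a) + a * -(1 - α * b) := by ring
    _ ≤ b * m + a * m := by
      gcongr
      · exact (le_abs_self _).trans (le_max_left _ _)
      · exact (neg_le_abs _).trans (le_max_right _ _)
    _ = m * (b + a) := by ring

variable {n : Type*} [Fintype n]

section DecidableEq
variable [DecidableEq n]

theorem Matrix.IsSymm.isSymmetric_toEuclideanCLM {A : Matrix n n ℝ} (hA : A.IsSymm) :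
    (toEuclideanCLM (𝕜 := ℝ) A : EuclideanSpace ℝ n →ₗ[ℝ] EuclideanSpace ℝ n).IsSymmetric := by
  rw [coe_toEuclideanCLM_eq_toEuclideanLin, isSymmetric_toEuclideanLin_iff, IsHermitian,
    conjTranspose_eq_transpose_of_trivial]
  exact hA

theorem Matrix.IsSymm.l2_opNorm_le_of_abs_dotProduct_mulVec_le {A : Matrix n n ℝ} (hA : A.IsSymm)
    {c : ℝ} (hc : 0 ≤ c) (h : ∀ v : n → ℝ, |v ⬝ᵥ A *ᵥ v| ≤ c * (v ⬝ᵥ v)) :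
    ‖toEuclideanCLM (𝕜 := ℝ) A‖ ≤ c := by
  rw [ContinuousLinearMap.norm_eq_iSup_rayleighQuotient _ hA.isSymmetric_toEuclideanCLM]
  refine ciSup_le fun x => ?_
  have hnorm : ‖x‖ ^ 2 = x.ofLp ⬝ᵥ x.ofLp := by
    rw [← real_inner_self_eq_norm_sq, EuclideanSpace.inner_eq_star_dotProduct, star_trivial]
  rw [ContinuousLinearMap.rayleighQuotient, ContinuousLinearMap.reApplyInnerSelf_apply,
    RCLike.re_to_real, real_inner_comm, inner_toEuclideanCLM, abs_div, abs_sq]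
  rcases (sq_nonneg ‖x‖).eq_or_lt with hx | hx
  · rw [← hx, div_zero]; exact hc
  · rw [div_le_iff₀ hx, hnorm]; exact h _

theorem Matrix.norm_le_l2_opNorm_of_mulVec_eq_smul {𝕜 : Type*} [RCLike 𝕜] {A : Matrix n n 𝕜}
    {v : n → 𝕜} {μ : 𝕜} (hv : v ≠ 0) (h : A *ᵥ v = μ • v) :
    ‖μ‖ ≤ ‖toEuclideanCLM (𝕜 := 𝕜) A‖ := by
  have hpos : 0 < ‖WithLp.toLp 2 v‖ := norm_pos_iff.mpr (by simpa using hv)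
  have happly : toEuclideanCLM (𝕜 := 𝕜) A (WithLp.toLp 2 v) = μ • WithLp.toLp 2 v := by
    rw [toEuclideanCLM_toLp, h, WithLp.toLp_smul]
  have := (toEuclideanCLM (𝕜 := 𝕜) A).le_opNorm (WithLp.toLp 2 v)
  rw [happly, norm_smul] at this
  exact le_of_mul_le_mul_right this hpos

end DecidableEq

variable (n) in
/-- The orthogonal projection `(1/N)𝟙𝟙ᵀ` onto the constant vectors. -/
noncomputable def averagingMatrix : Matrix n n ℝ := (Fintype.card n : ℝ)⁻¹ • of fun _ _ => 1

theorem isSymm_averagingMatrix : (averagingMatrix n).IsSymm := by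
  ext i j; simp [averagingMatrix]

theorem averagingMatrix_mulVec (v : n → ℝ) :
    averagingMatrix n *ᵥ v = ((Fintype.card n : ℝ)⁻¹ * (v ⬝ᵥ 1)) • 1 := by
  ext i; simp [averagingMatrix, mulVec, dotProduct, Finset.mul_sum]

theorem dotProduct_add_smul_one_self {w : n → ℝ} (hw : w ⬝ᵥ 1 = 0) (s : ℝ) :
    (w + s • 1) ⬝ᵥ (w + s • 1) = w ⬝ᵥ w + s ^ 2 * Fintype.card n := by
  simp only [add_dotProduct, dotProduct_add, smul_dotProduct, dotProduct_smul,
    dotProduct_comm 1 w, hw, one_dotProduct_one, smul_eq_mul]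
  ring

section Nonempty
variable [Nonempty n]

theorem exists_dotProduct_one_eq_zero_and_eq_add_smul_one (v : n → ℝ) :
    ∃ w : n → ℝ, ∃ s : ℝ, w ⬝ᵥ 1 = 0 ∧ v = w + s • 1 := by
  refine ⟨v - ((Fintype.card n : ℝ)⁻¹ * (v ⬝ᵥ 1)) • 1, (Fintype.card n : ℝ)⁻¹ * (v ⬝ᵥ 1), ?_,
    by abel⟩
  have : (Fintype.card n : ℝ) ≠ 0 := by positivity
  rw [sub_dotProduct, smul_dotProduct, one_dotProduct_one, smul_eq_mul]
  field_simp
  ring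

variable [DecidableEq n] {L : Matrix n n ℝ}

theorem mulVec_add_smul_one (hL1 : L *ᵥ 1 = 0) {w : n → ℝ} (hw : w ⬝ᵥ 1 = 0) (s α : ℝ) :
    (1 - α • L - averagingMatrix n) *ᵥ (w + s • 1) = w - α • L *ᵥ w := by
  rw [sub_mulVec, sub_mulVec, one_mulVec, smul_mulVec, averagingMatrix_mulVec, mulVec_add,
    mulVec_smul, hL1, add_dotProduct, smul_dotProduct, hw, one_dotProduct_one, smul_eq_mul,
    zero_add, smul_zero, add_zero, mul_comm s, inv_mul_cancel_left₀ (by positivity)]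
  module

theorem dotProduct_mulVec_add_smul_one (hL : L.IsSymm) (hL1 : L *ᵥ 1 = 0) {w : n → ℝ}
    (hw : w ⬝ᵥ 1 = 0) (s α : ℝ) :
    (w + s • 1) ⬝ᵥ (1 - α • L - averagingMatrix n) *ᵥ (w + s • 1)
      = w ⬝ᵥ w - α * (w ⬝ᵥ L *ᵥ w) := by
  have h1L : (1 : n → ℝ) ⬝ᵥ L *ᵥ w = 0 := by
    rw [dotProduct_mulVec, ← mulVec_transpose, hL.eq, hL1, zero_dotProduct]
  rw [mulVec_add_smul_one hL1 hw, add_dotProduct, smul_dotProduct, dotProduct_sub,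
    dotProduct_sub, dotProduct_smul, dotProduct_smul, dotProduct_comm 1 w, hw, h1L]
  simp

theorem abs_one_sub_mul_le_l2_opNorm (hL1 : L *ᵥ 1 = 0) {v : n → ℝ} (hv : v ≠ 0)
    (hv1 : v ⬝ᵥ 1 = 0) {μ : ℝ} (hLv : L *ᵥ v = μ • v) (α : ℝ) :
    |1 - α * μ| ≤ ‖toEuclideanCLM (n := n) (𝕜 := ℝ) (1 - α • L - averagingMatrix n)‖ := by
  refine norm_le_l2_opNorm_of_mulVec_eq_smul hv ?_
  simpa [hLv, smul_smul, sub_smul] using mulVec_add_smul_one hL1 hv1 0 α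

theorem l2_opNorm_one_sub_smul_sub_averagingMatrix_le (hL : L.IsSymm) (hL1 : L *ᵥ 1 = 0)
    {a b : ℝ} (hab : a ≤ b) (hsum : 0 < a + b)
    (hquad : ∀ w : n → ℝ, w ⬝ᵥ 1 = 0 →
      a * (w ⬝ᵥ w) ≤ w ⬝ᵥ L *ᵥ w ∧ w ⬝ᵥ L *ᵥ w ≤ b * (w ⬝ᵥ w)) :
    ‖toEuclideanCLM (n := n) (𝕜 := ℝ) (1 - (2 / (a + b)) • L - averagingMatrix n)‖
      ≤ (b - a) / (b + a) := by
  have hc : 0 ≤ (b - a) / (b + a) := div_nonneg (by linarith) (by linarith)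
  refine ((isSymm_one.sub (hL.smul _)).sub isSymm_averagingMatrix
    ).l2_opNorm_le_of_abs_dotProduct_mulVec_le hc fun v => ?_
  obtain ⟨w, s, hw, rfl⟩ := exists_dotProduct_one_eq_zero_and_eq_add_smul_one v
  rw [dotProduct_mulVec_add_smul_one hL hL1 hw, dotProduct_add_smul_one_self hw]
  calc _ ≤ (b - a) / (b + a) * (w ⬝ᵥ w) := abs_sub_two_div_add_mul_le hsum (hquad w hw)
    _ ≤ _ := by gcongr; exact le_add_of_nonneg_right (by positivity)

end Nonempty

/-- For a symmetric PSD Laplacian `L` of a connected graph on `N` nodes,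
with second smallest eigenvalue `λ₂ > 0` and largest eigenvalue `λmax`
(both attained on the orthogonal complement of the all-ones vector, on which the
quadratic form of `L` is pinched between them), the choice `α* = 2/(λ₂ + λmax)`
minimizes over `α ∈ ℝ` the spectral norm `‖I − αL − (1/N)𝟙𝟙ᵀ‖₂`, the minimal value
being `(λmax − λ₂)/(λmax + λ₂) < 1`. -/
theorem stmt0 (N : ℕ) (hN : 0 < N) (L : Matrix (Fin N) (Fin N) ℝ)
    (hsym : L.IsSymm) (hL1 : L *ᵥ (fun _ => (1 : ℝ)) = 0)
    (lam2 lamMax : ℝ) (hlam2 : 0 < lam2) (hle : lam2 ≤ lamMax)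
    (hquad : ∀ v : Fin N → ℝ, v ⬝ᵥ (fun _ => (1 : ℝ)) = 0 →
      lam2 * (v ⬝ᵥ v) ≤ v ⬝ᵥ (L *ᵥ v) ∧ v ⬝ᵥ (L *ᵥ v) ≤ lamMax * (v ⬝ᵥ v))
    (hev2 : ∃ v : Fin N → ℝ, v ≠ 0 ∧ v ⬝ᵥ (fun _ => (1 : ℝ)) = 0 ∧ L *ᵥ v = lam2 • v)
    (hevmax : ∃ v : Fin N → ℝ, v ≠ 0 ∧ v ⬝ᵥ (fun _ => (1 : ℝ)) = 0 ∧ L *ᵥ v = lamMax • v) :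
    let P : Matrix (Fin N) (Fin N) ℝ := (N : ℝ)⁻¹ • Matrix.of (fun _ _ => (1 : ℝ))
    let f : ℝ → ℝ := fun α => ‖Matrix.toEuclideanCLM (𝕜 := ℝ) ((1 : Matrix (Fin N) (Fin N) ℝ) - α • L - P)‖
    f (2 / (lam2 + lamMax)) = (lamMax - lam2) / (lamMax + lam2)
      ∧ (∀ α : ℝ, f (2 / (lam2 + lamMax)) ≤ f α)
      ∧ (lamMax - lam2) / (lamMax + lam2) < 1 := by
  intro P f
  have := Fin.pos_iff_nonempty.mp hN
  have hP : P = averagingMatrix (Fin N) := by simp [P, averagingMatrix]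
  have hsum : 0 < lam2 + lamMax := by linarith
  have hupper : f (2 / (lam2 + lamMax)) ≤ (lamMax - lam2) / (lamMax + lam2) := by
    simp only [f, hP]
    exact l2_opNorm_one_sub_smul_sub_averagingMatrix_le hsym hL1 hle hsum hquad
  have hlower : ∀ α, (lamMax - lam2) / (lamMax + lam2) ≤ f α := fun α => by
    obtain ⟨v₂, hv₂, hv₂1, hLv₂⟩ := hev2
    obtain ⟨vₘ, hvₘ, hvₘ1, hLvₘ⟩ := hevmax
    refine (div_le_max_abs_one_sub_mul hlam2.le (hlam2.le.trans hle) hsum α).trans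
      (max_le ?_ ?_) <;> simp only [f, hP]
    · exact abs_one_sub_mul_le_l2_opNorm hL1 hv₂ hv₂1 hLv₂ α
    · exact abs_one_sub_mul_le_l2_opNorm hL1 hvₘ hvₘ1 hLvₘ α
  have hmin := le_antisymm hupper (hlower _)
  refine ⟨hmin, fun α => hmin ▸ hlower α, ?_⟩
  rw [div_lt_one (by linarith)]
  linarith
end

section
/- Let C₁, ..., C_N ∈ ℝ^{1×n} be mutually orthogonal unit row vectors (so each CᵢᵀCᵢ is a rank-one orthogonal projection and distinct Cᵢ are orthogonal). If the system is one-step 2s-sparse observable (every removal of 2s rows leaves ∑ CᵢᵀCᵢ positive definite), then λ₀ = min over size-s removal sets 𝒩 of λ_min(∑_{i∈𝒩}CᵢᵀCᵢ) satisfies λ₀ > s. -/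
open Matrix

/-- Smallest eigenvalue of a symmetric matrix, as the infimum of the Rayleigh quotient. -/
noncomputable def lambdaMin {n : ℕ} (M : Matrix (Fin n) (Fin n) ℝ) : ℝ :=
  sInf {r : ℝ | ∃ x : Fin n → ℝ, x ≠ 0 ∧ r = x ⬝ᵥ (M *ᵥ x) / (x ⬝ᵥ x)}

/-- `λ₀`: the minimum, over all subsets obtained by removing `s` indices from
`{1,…,N}`, of the smallest eigenvalue of the remaining Gram matrix `∑_{i∈𝒩} Cᵢᵀ Cᵢ`. -/
noncomputable def lambda0 {N n : ℕ} (C : Fin N → (Fin n → ℝ)) (s : ℕ) : ℝ :=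
  sInf {r : ℝ | ∃ Γ : Finset (Fin N), Γ.card = s ∧
    r = lambdaMin (∑ i ∈ Γᶜ, vecMulVec (C i) (C i))}

/-!
Every distinct row `v` occurs at least `2s + 1` times: otherwise remove all its copies, padded to
`2s` rows; the remaining rows are orthogonal to `v`, so the remaining Gram matrix annihilates `v`.
Hence after removing any `s` rows each distinct row still occurs at least `s + 1` times, and the
quadratic form of the remaining Gram matrix is at least `(s + 1) ∑ᵥ (v ⬝ᵥ x)²`. Observability
also gives the distinct rows a trivial orthogonal complement, so they are an orthonormal basis and
Parseval turns this sum into `x ⬝ᵥ x`. Thus `λ₀ ≥ s + 1`.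
-/

open Finset

section Gram

variable {R ι m : Type*} [Fintype m]

theorem dotProduct_sum_vecMulVec_self_mulVec [CommSemiring R] (S : Finset ι) (u : ι → m → R)
    (x : m → R) :
    x ⬝ᵥ ((∑ i ∈ S, vecMulVec (u i) (u i)) *ᵥ x) = ∑ i ∈ S, (u i ⬝ᵥ x) ^ 2 := by
  simp only [sum_mulVec, dotProduct_sum, vecMulVec_mulVec, op_smul_eq_smul, dotProduct_smul,
    smul_eq_mul, dotProduct_comm x (u _), sq]

theorem exists_dotProduct_ne_zero_of_posDef {S : Finset ι} {u : ι → m → ℝ}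
    (h : (∑ i ∈ S, vecMulVec (u i) (u i)).PosDef) {x : m → ℝ} (hx : x ≠ 0) :
    ∃ i ∈ S, u i ⬝ᵥ x ≠ 0 := by
  by_contra! h0
  have hpos := h.dotProduct_mulVec_pos hx
  rw [star_trivial, dotProduct_sum_vecMulVec_self_mulVec,
    sum_eq_zero fun i hi => by rw [h0 i hi, sq, zero_mul]] at hpos
  exact hpos.false

theorem sum_sq_dotProduct_eq_dotProduct_self [CommRing R] {D : Finset (m → R)}
    (hunit : ∀ v ∈ D, v ⬝ᵥ v = 1) (horth : ∀ v ∈ D, ∀ w ∈ D, v ≠ w → v ⬝ᵥ w = 0)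
    (hcompl : ∀ y, (∀ v ∈ D, v ⬝ᵥ y = 0) → y = 0) (x : m → R) :
    ∑ v ∈ D, (v ⬝ᵥ x) ^ 2 = x ⬝ᵥ x := by
  have hx : x = ∑ v ∈ D, (v ⬝ᵥ x) • v := by
    refine sub_eq_zero.mp (hcompl _ fun w hw => ?_)
    rw [dotProduct_sub, dotProduct_sum, sum_eq_single_of_mem w hw fun v hv hvw => by
      rw [dotProduct_smul, horth w hw v hv hvw.symm, smul_zero]]
    rw [dotProduct_smul, hunit w hw, smul_eq_mul, mul_one, sub_self]
  calc ∑ v ∈ D, (v ⬝ᵥ x) ^ 2 = (∑ v ∈ D, (v ⬝ᵥ x) • v) ⬝ᵥ x := by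
        simp only [sum_dotProduct, smul_dotProduct, smul_eq_mul, sq]
    _ = x ⬝ᵥ x := by rw [← hx]

end Gram

theorem Finset.nsmul_sum_le_sum_comp_of_le_card_filter {ι β R : Type*} [DecidableEq β]
    [AddCommMonoid R] [PartialOrder R] [IsOrderedAddMonoid R]
    {S : Finset ι} {T : Finset β} {f : ι → β} {g : β → R} {k : ℕ}
    (hf : ∀ i ∈ S, f i ∈ T) (hg : ∀ b ∈ T, 0 ≤ g b) (hk : ∀ b ∈ T, k ≤ #{i ∈ S | f i = b}) :
    k • ∑ b ∈ T, g b ≤ ∑ i ∈ S, g (f i) := by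
  rw [← sum_fiberwise_of_maps_to hf, smul_sum]
  refine sum_le_sum fun b hb => ?_
  rw [sum_congr rfl fun i hi => by rw [(mem_filter.mp hi).2], sum_const]
  exact nsmul_le_nsmul_left (hg b hb) (hk b hb)

theorem le_lambdaMin {n : ℕ} (hn : 0 < n) {M : Matrix (Fin n) (Fin n) ℝ} {c : ℝ}
    (h : ∀ x, c * (x ⬝ᵥ x) ≤ x ⬝ᵥ (M *ᵥ x)) : c ≤ lambdaMin M := by
  refine le_csInf ⟨_, fun _ => 1, fun h1 => one_ne_zero (congrFun h1 ⟨0, hn⟩), rfl⟩ ?_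
  rintro r ⟨x, hx, rfl⟩
  exact (le_div_iff₀ (by simpa using dotProduct_self_star_pos_iff.mpr hx)).mpr (h x)

theorem le_lambda0 {N n : ℕ} {C : Fin N → Fin n → ℝ} {s : ℕ} (hs : s ≤ N) {c : ℝ}
    (h : ∀ Γ : Finset (Fin N), #Γ = s → c ≤ lambdaMin (∑ i ∈ Γᶜ, vecMulVec (C i) (C i))) :
    c ≤ lambda0 C s := by
  obtain ⟨Γ₀, -, hΓ₀⟩ := exists_subset_card_eq (s := (univ : Finset (Fin N))) (by simpa using hs)
  refine le_csInf ⟨_, Γ₀, hΓ₀, rfl⟩ ?_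
  rintro r ⟨Γ, hΓ, rfl⟩
  exact h Γ hΓ

def IsSparseObservable {ι m : Type*} [Fintype ι] [DecidableEq ι] [Fintype m] (C : ι → m → ℝ)
    (k : ℕ) : Prop :=
  ∀ Γ : Finset ι, #Γ = k → (∑ i ∈ Γᶜ, vecMulVec (C i) (C i)).PosDef

namespace IsSparseObservable

variable {ι m : Type*} [Fintype ι] [DecidableEq ι] [Fintype m] {C : ι → m → ℝ} {k : ℕ}

theorem exists_dotProduct_ne_zero (h : IsSparseObservable C k) (hk : k ≤ Fintype.card ι)
    {Γ : Finset ι} (hΓ : #Γ ≤ k) {x : m → ℝ} (hx : x ≠ 0) : ∃ i ∉ Γ, C i ⬝ᵥ x ≠ 0 := by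
  obtain ⟨Γ', hΓΓ', -, hΓ'⟩ := exists_subsuperset_card_eq (subset_univ Γ) hΓ (by rwa [card_univ])
  obtain ⟨i, hi, hix⟩ := exists_dotProduct_ne_zero_of_posDef (h Γ' hΓ') hx
  exact ⟨i, fun hiΓ => mem_compl.mp hi (hΓΓ' hiΓ), hix⟩

theorem eq_zero_of_forall_dotProduct_eq_zero (h : IsSparseObservable C k)
    (hk : k ≤ Fintype.card ι) {x : m → ℝ} (hx : ∀ i, C i ⬝ᵥ x = 0) : x = 0 := by
  by_contra hx0
  obtain ⟨i, -, hix⟩ := h.exists_dotProduct_ne_zero hk (Γ := ∅) (by simp) hx0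
  exact hix (hx i)

theorem lt_card_filter_compl_eq [DecidableEq (m → ℝ)] {s : ℕ} (h : IsSparseObservable C (2 * s))
    (hs : 2 * s ≤ Fintype.card ι) {Γ : Finset ι} (hΓ : #Γ ≤ s) {j : ι} (hj : C j ≠ 0)
    (horth : ∀ i, C i ≠ C j → C i ⬝ᵥ C j = 0) : s < #{i ∈ Γᶜ | C i = C j} := by
  by_contra! hF
  obtain ⟨i, hi, hij⟩ := h.exists_dotProduct_ne_zero hs (Γ := Γ ∪ {i ∈ Γᶜ | C i = C j})
    ((card_union_le _ _).trans (by omega)) hj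
  rw [mem_union, not_or] at hi
  exact hi.2 (mem_filter.mpr ⟨mem_compl.mpr hi.1, by_contra fun hne => hij (horth i hne)⟩)

end IsSparseObservable

theorem stmt7_general (N n s : ℕ) (hn : 0 < n) (hs : 2 * s ≤ N) (C : Fin N → (Fin n → ℝ))
    (hunit : ∀ i, C i ⬝ᵥ C i = 1)
    (horth : ∀ i j, C i = C j ∨ C i ⬝ᵥ C j = 0)
    (hobs : ∀ Γ : Finset (Fin N), Γ.card = 2 * s →
      (∑ i ∈ Γᶜ, vecMulVec (C i) (C i)).PosDef) :
    (s : ℝ) < lambda0 C s := by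
  classical
  have hC : ∀ i, C i ≠ 0 := fun i h0 => by simpa [h0] using hunit i
  have hCC : ∀ i j, C i ≠ C j → C i ⬝ᵥ C j = 0 := fun i j h => (horth i j).resolve_left h
  have hsN : 2 * s ≤ Fintype.card (Fin N) := by rwa [Fintype.card_fin]
  have hparseval (x : Fin n → ℝ) : ∑ v ∈ univ.image C, (v ⬝ᵥ x) ^ 2 = x ⬝ᵥ x := by
    refine sum_sq_dotProduct_eq_dotProduct_self (forall_mem_image.mpr fun i _ => hunit i)
      (forall_mem_image.mpr fun i _ => forall_mem_image.mpr fun j _ => hCC i j)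
      (fun y hy => IsSparseObservable.eq_zero_of_forall_dotProduct_eq_zero hobs hsN
        fun i => hy (C i) (mem_image_of_mem C (mem_univ i))) x
  refine (lt_add_one (s : ℝ)).trans_le (le_lambda0 (by omega) fun Γ hΓ => le_lambdaMin hn
    fun x => ?_)
  have hcopies : (s + 1) • ∑ v ∈ univ.image C, (v ⬝ᵥ x) ^ 2 ≤ ∑ i ∈ Γᶜ, (C i ⬝ᵥ x) ^ 2 :=
    nsmul_sum_le_sum_comp_of_le_card_filter (fun i _ => mem_image_of_mem C (mem_univ i))
      (fun _ _ => sq_nonneg _) fun v hv => by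
        obtain ⟨j, -, rfl⟩ := mem_image.mp hv
        exact IsSparseObservable.lt_card_filter_compl_eq hobs hsN hΓ.le (hC j) (hCC · j)
  rw [hparseval, nsmul_eq_mul] at hcopies
  rw [dotProduct_sum_vecMulVec_self_mulVec]
  exact_mod_cast hcopies

/-- sufficiency direction of Lemma 3: if `C₁,…,C_N` are unit row
vectors drawn from an orthonormal family (pairwise equal or orthogonal), and the
system is one-step `2s`-sparse observable, then `λ₀ > s`. -/
theorem stmt7 (N n s : ℕ) (hn : 0 < n) (hN : n ≤ N) (hs : 2 * s ≤ N) (C : Fin N → (Fin n → ℝ))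
    (hunit : ∀ i, C i ⬝ᵥ C i = 1)
    (horth : ∀ i j, C i = C j ∨ C i ⬝ᵥ C j = 0)
    (hobs : ∀ Γ : Finset (Fin N), Γ.card = 2 * s →
      (∑ i ∈ Γᶜ, vecMulVec (C i) (C i)).PosDef) :
    (s : ℝ) < lambda0 C s :=
  stmt7_general N n s hn hs C hunit horth hobs
end

section
/- Let γ ∈ (0,1), a ≥ 1, η₀ > 0, β > 0, N ≥ 1, and |𝒜| ≥ 0 with λ₀ > |𝒜| (where λ₀ ≤ N). Then there exist η₀ large enough, β small enough relative to η₀, and L large enough such that the quantity m₀ = ϑ₀(1 − β|𝒜|/(Nη₀))(1 − k*λ₀/N)^{-1}, defined via the paper's notation (with ϑ₀ = 1 − (Q₀/η₀)(1 − β|𝒜|/(Nη₀))^{-1}, k* = min{1, β/(a(p₀*+η₀)+b_w+b_v)}, p₀* = aγ^L√N η₀ + √N β γ^L/(1 − aγ^L), Q₀ = (1 − |𝒜|/N)(b_w + b_v + a p₀*) + b_w), can be made strictly greater than 1 when a = 1; that is, the feasibility region of condition 1 ≤ a < min{m₀, γ^{-L}} is nonempty for a = 1 if λ₀ > |𝒜|.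 -/
private lemma aux_p0le (rN η g Nr : ℝ) (hrN : 0 < rN) (hη : 0 < η) (hg : 0 < g)
    (hgh : g ≤ 1/2) (hrNle : rN ≤ Nr) :
    g * rN * η + rN * η * g / (1 - g) ≤ 3 * Nr * g * η := by
  have h1g : (0:ℝ) < 1 - g := by linarith
  have h2 : rN * η * g / (1 - g) ≤ 2 * rN * η * g := by
    rw [div_le_iff₀ h1g]
    nlinarith [mul_nonneg (mul_pos (mul_pos hrN hη) hg).le
      (show (0:ℝ) ≤ 1 - 2*g by linarith)]
  nlinarith [mul_le_mul_of_nonneg_right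
    (mul_le_mul_of_nonneg_left hrNle hg.le) hη.le]

private lemma aux_E1 (p₀ bw bv δ η g Nr : ℝ) (hN : 0 < Nr) (hη : 0 < η)
    (hp : p₀ ≤ 3 * Nr * g * η) (h4 : Nr^2 * g ≤ δ/64)
    (h5 : Nr * (bw + bv) ≤ δ*η/16) (hg : 0 < g) :
    Nr * (p₀ + bw + bv) ≤ 7/64 * δ * η := by
  have h3 : Nr * p₀ ≤ 3 * Nr^2 * g * η := by
    nlinarith [mul_le_mul_of_nonneg_left hp hN.le]
  have h4' : 3 * Nr^2 * g * η ≤ 3/64 * δ * η := by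
    nlinarith [mul_le_mul_of_nonneg_right h4 hη.le]
  nlinarith

private lemma aux_E2 (E δ η Nr : ℝ) (hN : 0 < Nr) (hη : 0 < η) (hδ : 0 < δ)
    (hδN : δ ≤ Nr) (hE1 : Nr * E ≤ 7/64 * δ * η) : E ≤ 7/64 * η := by
  nlinarith [mul_le_mul_of_nonneg_right hδN (show (0:ℝ) ≤ 7/64*η by linarith)]

private lemma aux_Qle (t X bw : ℝ) (ht : 0 ≤ t) (hX : 0 ≤ X) :
    (1 - t) * X + bw ≤ X + bw := by
  nlinarith [mul_nonneg ht hX]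

private lemma aux_poly (s' Nr δ η E Q lam0 bw : ℝ)
    (hη : 0 < η) (hδ : 0 < δ) (hE : 0 < E) (hbw : 0 ≤ bw)
    (hE1 : Nr * E ≤ 7/64 * δ * η) (hE2 : E ≤ 7/64 * η)
    (hNbw : Nr * bw ≤ δ*η/16) (hsN : s' ≤ Nr) (hs : 0 ≤ s')
    (hQ : Q ≤ E + bw) (hN : 0 < Nr) (hlam : lam0 = s' + δ) :
    s' * η * (η + E) + Nr * Q * (η + E) < lam0 * η * η := by
  have t1 : s' * η * E ≤ Nr * E * η := by
    nlinarith [mul_nonneg (mul_nonneg (show (0:ℝ) ≤ Nr - s' by linarith) hη.le) hE.le]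
  have t2 : Nr * E * η ≤ 7/64 * δ * η * η := by
    nlinarith [mul_le_mul_of_nonneg_right hE1 hη.le]
  have t3 : Nr * E * E ≤ (7/64 * δ * η) * (7/64 * η) := by
    nlinarith [mul_le_mul hE1 hE2 hE.le (show (0:ℝ) ≤ 7/64 * δ * η by nlinarith)]
  have t4 : Nr * bw * η ≤ δ * η / 16 * η := by
    nlinarith [mul_le_mul_of_nonneg_right hNbw hη.le]
  have t5 : Nr * bw * E ≤ (δ * η / 16) * (7/64 * η) := by
    nlinarith [mul_le_mul hNbw hE2 hE.le (show (0:ℝ) ≤ δ * η / 16 by nlinarith)]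
  have hQF : Nr * Q * (η + E) ≤ Nr * (E + bw) * (η + E) :=
    mul_le_mul_of_nonneg_right (mul_le_mul_of_nonneg_left hQ hN.le) (by linarith)
  have hpos : 0 < δ * η * η := by positivity
  nlinarith [t1, t2, t3, t4, t5, hQF, hpos]

private lemma aux_cross (s' Nr η Q F lam0 : ℝ) (hN : 0 < Nr)
    (hpoly : s' * η * F + Nr * Q * F < lam0 * η * η) :
    (s' * η + Nr * Q) * (F * Nr) < η * lam0 * (Nr * η) := by
  nlinarith [mul_lt_mul_of_pos_left hpoly hN]

set_option maxHeartbeats 1000000 in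
/-- sufficiency direction of Theorem 2 at the boundary `a = 1`:
if `λ₀ > |𝒜|` (with `λ₀ ≤ N`), then for the paper's quantities
`p₀* = aγ^L√N η₀ + √N β γ^L/(1 − aγ^L)`,
`k* = min{1, β/(a(p₀*+η₀)+b_w+b_v)}`,
`Q₀ = (1 − |𝒜|/N)(b_w + b_v + a p₀*) + b_w`,
`ϑ₀ = 1 − (Q₀/η₀)(1 − β|𝒜|/(Nη₀))⁻¹`,
`m₀ = ϑ₀(1 − β|𝒜|/(Nη₀))(1 − k*λ₀/N)⁻¹`,
there exist `η₀ > 0` large enough, `β > 0` (small relative to `η₀`) and an integer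
`L ≥ 1` such that `aγ^L < 1` and `a < m₀` hold with `a = 1`; i.e. the feasibility
region of condition `1 ≤ a < min{m₀, γ^{-L}}` is nonempty for `a = 1`. -/
theorem stmt19 (γ bw bv lam0 : ℝ) (N s : ℕ)
    (hγ0 : 0 < γ) (hγ1 : γ < 1) (hbw : 0 ≤ bw) (hbv : 0 ≤ bv)
    (hN : 0 < N) (hlam_s : (s : ℝ) < lam0) (hlamN : lam0 ≤ N) :
    ∃ (η₀ β : ℝ) (L : ℕ), 0 < η₀ ∧ 0 < β ∧ 1 ≤ L ∧
      (let a : ℝ := 1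
       let p₀ : ℝ := a * γ ^ L * Real.sqrt N * η₀ + Real.sqrt N * β * γ ^ L / (1 - a * γ ^ L)
       let kstar : ℝ := min 1 (β / (a * (p₀ + η₀) + bw + bv))
       let Q₀ : ℝ := (1 - (s : ℝ) / N) * (bw + bv + a * p₀) + bw
       let θ₀ : ℝ := 1 - Q₀ / η₀ * (1 - β * s / (N * η₀))⁻¹
       let m₀ : ℝ := θ₀ * (1 - β * s / (N * η₀)) * (1 - kstar * lam0 / N)⁻¹
       a * γ ^ L < 1 ∧ a < m₀) := by
  have hN' : (0:ℝ) < N := by exact_mod_cast hN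
  have hN1 : (1:ℝ) ≤ N := by exact_mod_cast hN
  have hs0 : (0:ℝ) ≤ s := Nat.cast_nonneg s
  have hlam0 : 0 < lam0 := lt_of_le_of_lt hs0 hlam_s
  have hsN : (s:ℝ) < N := lt_of_lt_of_le hlam_s hlamN
  obtain ⟨δ, hδdef⟩ : ∃ δ : ℝ, δ = lam0 - (s:ℝ) := ⟨_, rfl⟩
  have hδ : 0 < δ := by rw [hδdef]; linarith
  have hδN : δ ≤ N := by rw [hδdef]; linarith
  have hNsqpos : (0:ℝ) < (N:ℝ)^2 := pow_pos hN' 2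
  -- choose L
  have hbpos : 0 < min (1/2) (δ/(64*N^2)) := by
    apply lt_min
    · norm_num
    · exact div_pos hδ (by linarith)
  obtain ⟨L₀, hL₀⟩ := exists_pow_lt_of_lt_one hbpos hγ1
  have hgle : γ ^ (max L₀ 1) ≤ γ ^ L₀ :=
    pow_le_pow_of_le_one hγ0.le hγ1.le (le_max_left _ _)
  set L := max L₀ 1 with hLdef
  have hgpos : 0 < γ ^ L := pow_pos hγ0 L
  set g := γ ^ L with hgdef
  clear_value L
  have hghalf : g ≤ 1/2 := le_trans hgle (le_trans hL₀.le (min_le_left _ _))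
  have hgsmall : g ≤ δ/(64*N^2) := le_trans hgle (le_trans hL₀.le (min_le_right _ _))
  have hglt1 : g < 1 := by linarith
  clear hL₀ hgle hbpos
  -- choose η
  obtain ⟨η, hηdef⟩ : ∃ η : ℝ, η = max 1 (16*N*(3*bw+2*bv)/δ) := ⟨_, rfl⟩
  have hη1 : (1:ℝ) ≤ η := hηdef ▸ le_max_left _ _
  have hηpos : 0 < η := lt_of_lt_of_le one_pos hη1
  have hηB : 16*N*(3*bw+2*bv)/δ ≤ η := hηdef ▸ le_max_right _ _
  have hNbwbv : (N:ℝ)*(3*bw+2*bv) ≤ δ*η/16 := by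
    rw [div_le_iff₀ hδ] at hηB
    nlinarith
  have hNbw : (N:ℝ)*bw ≤ δ*η/16 := by nlinarith
  have hNbwbv' : (N:ℝ)*(bw+bv) ≤ δ*η/16 := by nlinarith
  clear hηB hηdef
  refine ⟨η, η, L, hηpos, hηpos, by rw [hLdef]; exact le_max_right _ _, ?_⟩
  simp only [one_mul, ← hgdef]
  clear_value g
  clear hLdef
  -- abbreviations matching the goal
  set rN := Real.sqrt (N:ℝ) with hrNdef
  have hrNpos : 0 < rN := Real.sqrt_pos.mpr hN'
  have hrNsq : rN^2 = N := Real.sq_sqrt hN'.le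
  clear_value rN
  clear hrNdef
  have hrNle : rN ≤ N := by nlinarith [sq_nonneg (rN - 1)]
  have h1g : (1:ℝ)/2 ≤ 1 - g := by linarith
  have h1gpos : (0:ℝ) < 1 - g := by linarith
  set p₀ := g * rN * η + rN * η * g / (1 - g) with hp₀def
  clear_value p₀
  have hp₀pos : 0 < p₀ := by
    have h0 : 0 < rN * η * g / (1 - g) :=
      div_pos (mul_pos (mul_pos hrNpos hηpos) hgpos) h1gpos
    have h0' : 0 < g * rN * η := mul_pos (mul_pos hgpos hrNpos) hηpos
    rw [hp₀def]; linarith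
  have hp₀le : p₀ ≤ 3 * N * g * η := by
    rw [hp₀def]
    exact aux_p0le rN η g N hrNpos hηpos hgpos hghalf hrNle
  clear hp₀def hrNsq hrNle hrNpos h1g
  set E := p₀ + bw + bv with hEdef
  clear_value E
  have hEpos : 0 < E := by rw [hEdef]; linarith
  have hE1 : (N:ℝ) * E ≤ 7/64 * δ * η := by
    have h4 : (N:ℝ)^2 * g ≤ δ/64 := by
      rw [le_div_iff₀ (show (0:ℝ) < 64*(N:ℝ)^2 by linarith)] at hgsmall
      nlinarith
    rw [hEdef]
    exact aux_E1 p₀ bw bv δ η g N hN' hηpos hp₀le h4 hNbwbv' hgpos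
  have hE2 : E ≤ 7/64 * η := aux_E2 E δ η N hN' hηpos hδ hδN hE1
  clear hgsmall hNbwbv hNbwbv' hp₀le
  set F := p₀ + η + bw + bv with hFdef
  clear_value F
  have hFeq : F = η + E := by rw [hFdef, hEdef]; ring
  have hFpos : 0 < F := by rw [hFeq]; linarith
  set Q₀ := (1 - (s:ℝ)/N) * (bw + bv + p₀) + bw with hQdef
  clear_value Q₀
  have hsN1 : (s:ℝ)/N ≤ 1 := by rw [div_le_one hN']; linarith
  have hsN0 : 0 ≤ 1 - (s:ℝ)/N := by linarith
  have hsNnn : 0 ≤ (s:ℝ)/N := div_nonneg hs0 hN'.le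
  have hQ0 : 0 ≤ Q₀ := by
    rw [hQdef]
    have h8 : 0 ≤ (1 - (s:ℝ)/N) * (bw + bv + p₀) :=
      mul_nonneg hsN0 (by linarith)
    linarith
  have hQle : Q₀ ≤ E + bw := by
    rw [hQdef, hEdef]
    have := aux_Qle ((s:ℝ)/N) (bw + bv + p₀) bw hsNnn (by linarith)
    linarith
  -- simplify kstar and T inside the goal
  have hkval : min 1 (η / F) = η / F := by
    apply min_eq_right
    apply le_of_lt
    rw [div_lt_one hFpos, hFeq]
    linarith
  have hTval : η * (s:ℝ) / ((N:ℝ) * η) = (s:ℝ)/(N:ℝ) := by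
    rw [mul_comm ((N:ℝ)) η, mul_div_mul_left _ _ hηpos.ne']
  rw [hkval, hTval]
  clear hkval hTval hQdef hFdef hEdef
  set k := η / F with hkdef
  clear_value k
  have hkpos : 0 < k := hkdef ▸ div_pos hηpos hFpos
  have hklt1 : k < 1 := by
    rw [hkdef, div_lt_one hFpos, hFeq]; linarith
  -- key polynomial inequality
  have hpoly : (s:ℝ) * η * F + N * Q₀ * F < lam0 * η * η := by
    rw [hFeq]
    exact aux_poly (s:ℝ) (N:ℝ) δ η E Q₀ lam0 bw hηpos hδ hEpos hbw hE1 hE2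
      hNbw hsN.le hs0 hQle hN' (by rw [hδdef]; ring)
  -- core inequality
  have core : (s:ℝ)/N + Q₀/η < k * lam0 / N := by
    have e1 : (s:ℝ)/N + Q₀/η = ((s:ℝ)*η + N*Q₀)/(N*η) :=
      div_add_div _ _ hN'.ne' hηpos.ne'
    have e2 : k * lam0 / N = (η * lam0) / (F * N) := by
      rw [hkdef, div_mul_eq_mul_div, div_div]
    rw [e1, e2, div_lt_div_iff₀ (mul_pos hN' hηpos) (mul_pos hFpos hN')]
    exact aux_cross (s:ℝ) (N:ℝ) η Q₀ F lam0 hN' hpoly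
  -- denominator positivity
  have h6 : k * lam0 < lam0 := by nlinarith [mul_lt_mul_of_pos_right hklt1 hlam0]
  have hD : 0 < 1 - k * lam0 / N := by
    have h7 : k * lam0 / N < 1 := by
      rw [div_lt_one hN']; linarith
    linarith
  have hTpos : 0 < 1 - (s:ℝ)/N := by
    have := (div_lt_one hN').mpr hsN
    linarith
  constructor
  · exact hglt1
  · have hθ : (1 - Q₀ / η * (1 - (s:ℝ)/N)⁻¹) * (1 - (s:ℝ)/N)
        = (1 - (s:ℝ)/N) - Q₀/η := by
      rw [sub_mul, one_mul, mul_assoc, inv_mul_cancel₀ hTpos.ne', mul_one]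
    rw [hθ, ← div_eq_mul_inv, one_lt_div hD]
    linarith
end
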